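/- arXiv:2509.03898 — 2 statements merged into one kernel-verified Lean document; each statement's English description precedes it below -/
import Mathlib

section
/- Let A ∈ ℝ^{m×d} and let S ≥ 1 be an integer such that the restricted isometry constants of A satisfy δ_{3S} + 3·δ_{4S} < 2. Then there exists a constant C_S > 0, depending only on δ_{4S}, with the following property: for every σ ≥ 0, every x ∈ ℝ^d supported on a set of cardinality at most S, every e ∈ ℝ^m with ‖e‖₂ ≤ σ, and y = Ax + e, any minimizer x⋆ of the problem min ‖z‖₁ subject to ‖Az − y‖₂ ≤ σ satisfies ‖x⋆ − x‖₂ ≤ C_S·σ. -/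
open Matrix

/-- The Euclidean (`ℓ²`) norm on `ℝ^n`. -/
noncomputable def l2norm {n : ℕ} (x : Fin n → ℝ) : ℝ := Real.sqrt (∑ i, (x i) ^ 2)

/-- The `ℓ¹` norm on `ℝ^n`. -/
def l1norm {n : ℕ} (x : Fin n → ℝ) : ℝ := ∑ i, |x i|

/-- `x ∈ ℝ^d` is `S`-sparse: its support has cardinality at most `S`. -/
def IsSparse {d : ℕ} (S : ℕ) (x : Fin d → ℝ) : Prop :=
  (Finset.univ.filter fun i => x i ≠ 0).card ≤ S

/-- The `S`-restricted isometry constant `δ_S(A)`: the smallest `δ ≥ 0` such that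
`(1 − δ)‖x‖₂² ≤ ‖Ax‖₂² ≤ (1 + δ)‖x‖₂²` for every `S`-sparse `x`. -/
noncomputable def RIC {m d : ℕ} (A : Matrix (Fin m) (Fin d) ℝ) (S : ℕ) : ℝ :=
  sInf {δ : ℝ | 0 ≤ δ ∧ ∀ x : Fin d → ℝ, IsSparse S x →
    (1 - δ) * l2norm x ^ 2 ≤ l2norm (A.mulVec x) ^ 2 ∧
    l2norm (A.mulVec x) ^ 2 ≤ (1 + δ) * l2norm x ^ 2}

/-!
Write `h = x⋆ - x` and let `T` be the support of `x`. Minimality of `x⋆` against the feasible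
point `x` puts `h` in the cone `‖h_{Tᶜ}‖₁ ≤ ‖h_T‖₁`, and `‖Ah‖₂ ≤ 2σ` by the triangle inequality.
Sort `h_{Tᶜ}` by decreasing magnitude and cut it into blocks `T₁, T₂, …` of size `3S`. Every entry
of a block is dominated by the mean of the previous one, so `Σ_{j ≥ 2} ‖h_{T_j}‖₂` is at most
`‖h_{Tᶜ}‖₁ / √(3S) ≤ ‖h_T‖₁ / √(3S) ≤ ‖w‖₂ / √3` for the `4S`-sparse head `w = h_T + h_{T₁}`.
Applying the lower RIP bound to `w` and the upper one to each later block gives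
`(√(1 - δ_{4S}) - √((1 + δ_{3S}) / 3)) ‖w‖₂ ≤ ‖Ah‖₂`, and the constant in front of `‖w‖₂` is
positive exactly when `δ_{3S} + 3 δ_{4S} < 2`.
-/

open Finset

section Norms

variable {n : ℕ}

lemma l2norm_nonneg (x : Fin n → ℝ) : 0 ≤ l2norm x := Real.sqrt_nonneg _

lemma sq_l2norm (x : Fin n → ℝ) : l2norm x ^ 2 = ∑ i, x i ^ 2 :=
  Real.sq_sqrt (sum_nonneg fun _ _ => sq_nonneg _)

lemma l2norm_eq_norm_toLp (x : Fin n → ℝ) : l2norm x = ‖WithLp.toLp 2 x‖ := by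
  simp [l2norm, EuclideanSpace.norm_eq]

@[simp] lemma l2norm_zero : l2norm (0 : Fin n → ℝ) = 0 := by simp [l2norm]

@[simp] lemma l2norm_neg (x : Fin n → ℝ) : l2norm (-x) = l2norm x := by simp [l2norm]

lemma l2norm_add_le (x y : Fin n → ℝ) : l2norm (x + y) ≤ l2norm x + l2norm y := by
  simpa only [l2norm_eq_norm_toLp, WithLp.toLp_add] using norm_add_le _ _

lemma l2norm_sub_le (x y : Fin n → ℝ) : l2norm (x - y) ≤ l2norm x + l2norm y := by
  simpa only [l2norm_eq_norm_toLp, WithLp.toLp_sub] using norm_sub_le _ _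

lemma l2norm_sum_le {ι : Type*} (s : Finset ι) (f : ι → Fin n → ℝ) :
    l2norm (∑ j ∈ s, f j) ≤ ∑ j ∈ s, l2norm (f j) := by
  simpa only [l2norm_eq_norm_toLp, WithLp.toLp_sum] using norm_sum_le _ _

lemma l2norm_le_of_abs_le {x y : Fin n → ℝ} (h : ∀ i, |x i| ≤ |y i|) : l2norm x ≤ l2norm y :=
  Real.sqrt_le_sqrt <| sum_le_sum fun i _ => sq_le_sq.mpr (h i)

lemma l1norm_nonneg (x : Fin n → ℝ) : 0 ≤ l1norm x := sum_nonneg fun _ _ => abs_nonneg _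

lemma l1norm_le_sqrt_mul_l2norm {S : ℕ} {x : Fin n → ℝ} (hx : IsSparse S x) :
    l1norm x ≤ √S * l2norm x := by
  set T := univ.filter fun i => x i ≠ 0
  have hT : ∀ i ∉ T, x i = 0 := by simp [T]
  have h1 : l1norm x = ∑ i ∈ T, |x i| :=
    (sum_subset (subset_univ T) fun i _ hi => by simp [hT i hi]).symm
  have h2 : ∑ i ∈ T, |x i| ^ 2 = l2norm x ^ 2 := by
    rw [sq_l2norm]
    exact (sum_subset (subset_univ T) fun i _ hi => by simp [hT i hi]).trans (by simp)
  have hsq : l1norm x ^ 2 ≤ (√S * l2norm x) ^ 2 := by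
    rw [mul_pow, Real.sq_sqrt (Nat.cast_nonneg S), h1, ← h2]
    exact sq_sum_le_card_mul_sum_sq.trans
      (mul_le_mul_of_nonneg_right (by exact_mod_cast hx) (sum_nonneg fun _ _ => sq_nonneg _))
  exact abs_le_of_sq_le_sq' hsq (mul_nonneg (Real.sqrt_nonneg _) (l2norm_nonneg x)) |>.2

end Norms

section RestrictedIsometry

variable {m d : ℕ} (A : Matrix (Fin m) (Fin d) ℝ)

lemma l2norm_mulVec_le_opNorm_mul (x : Fin d → ℝ) :
    l2norm (A *ᵥ x) ≤ ‖LinearMap.toContinuousLinearMap (Matrix.toEuclideanLin A)‖ * l2norm x := by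
  rw [l2norm_eq_norm_toLp, l2norm_eq_norm_toLp]
  exact (LinearMap.toContinuousLinearMap (Matrix.toEuclideanLin A)).le_opNorm (WithLp.toLp 2 x)

lemma RIC_spec (S : ℕ) :
    0 ≤ RIC A S ∧ ∀ x : Fin d → ℝ, IsSparse S x →
      (1 - RIC A S) * l2norm x ^ 2 ≤ l2norm (A *ᵥ x) ^ 2 ∧
      l2norm (A *ᵥ x) ^ 2 ≤ (1 + RIC A S) * l2norm x ^ 2 := by
  refine IsClosed.csInf_mem (s := {δ : ℝ | 0 ≤ δ ∧ ∀ x : Fin d → ℝ, IsSparse S x →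
      (1 - δ) * l2norm x ^ 2 ≤ l2norm (A *ᵥ x) ^ 2 ∧
      l2norm (A *ᵥ x) ^ 2 ≤ (1 + δ) * l2norm x ^ 2}) ?_ ?_ ⟨0, fun δ hδ => hδ.1⟩
  · simp only [Set.ofPred_and, Set.ofPred_forall]
    exact isClosed_Ici.inter <| isClosed_iInter fun x => isClosed_iInter fun _ =>
      (isClosed_le (by fun_prop) continuous_const).inter (isClosed_le continuous_const (by fun_prop))
  · set M := ‖LinearMap.toContinuousLinearMap (Matrix.toEuclideanLin A)‖
    refine ⟨1 + M ^ 2, by positivity, fun x _ => ⟨?_, ?_⟩⟩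
    · nlinarith [sq_nonneg (l2norm x), sq_nonneg (l2norm (A *ᵥ x)), sq_nonneg M]
    · have h := pow_le_pow_left₀ (l2norm_nonneg _) (l2norm_mulVec_le_opNorm_mul A x) 2
      nlinarith [sq_nonneg (l2norm x)]

lemma RIC_nonneg (S : ℕ) : 0 ≤ RIC A S := (RIC_spec A S).1

lemma sqrt_one_sub_RIC_mul_le {S : ℕ} {x : Fin d → ℝ} (hx : IsSparse S x) :
    √(1 - RIC A S) * l2norm x ≤ l2norm (A *ᵥ x) := by
  rw [← Real.sqrt_sq (l2norm_nonneg x), ← Real.sqrt_mul' _ (sq_nonneg _),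
    ← Real.sqrt_sq (l2norm_nonneg (A *ᵥ x))]
  exact Real.sqrt_le_sqrt ((RIC_spec A S).2 x hx).1

lemma l2norm_mulVec_le_sqrt_one_add_RIC_mul {S : ℕ} {x : Fin d → ℝ} (hx : IsSparse S x) :
    l2norm (A *ᵥ x) ≤ √(1 + RIC A S) * l2norm x := by
  rw [← Real.sqrt_sq (l2norm_nonneg x), ← Real.sqrt_mul' _ (sq_nonneg _),
    ← Real.sqrt_sq (l2norm_nonneg (A *ᵥ x))]
  exact Real.sqrt_le_sqrt ((RIC_spec A S).2 x hx).2

end RestrictedIsometry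

section Support

variable {n : ℕ}

lemma isSparse_indicator (T : Finset (Fin n)) (x : Fin n → ℝ) :
    IsSparse #T ((T : Set (Fin n)).indicator x) :=
  card_le_card fun i hi => by
    by_contra hiT
    simp [hiT] at hi

lemma IsSparse.mono {S S' : ℕ} {x : Fin n → ℝ} (hx : IsSparse S x) (h : S ≤ S') :
    IsSparse S' x :=
  le_trans hx h

lemma IsSparse.add {S S' : ℕ} {x y : Fin n → ℝ} (hx : IsSparse S x) (hy : IsSparse S' y) :
    IsSparse (S + S') (x + y) := by
  refine le_trans (card_le_card fun i hi => ?_) ((card_union_le _ _).trans (add_le_add hx hy))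
  by_contra hxy
  simp_all

lemma l1norm_indicator (T : Finset (Fin n)) (x : Fin n → ℝ) :
    l1norm ((T : Set (Fin n)).indicator x) = ∑ i ∈ T, |x i| := by
  simp [l1norm, Set.indicator_apply, apply_ite (|·|)]

lemma l1norm_indicator_compl_le_of_l1norm_add_le {T : Finset (Fin n)} {x h : Fin n → ℝ}
    (hx : ∀ i ∉ T, x i = 0) (hmin : l1norm (x + h) ≤ l1norm x) :
    l1norm ((T : Set (Fin n))ᶜ.indicator h) ≤ l1norm ((T : Set (Fin n)).indicator h) := by
  have hpt : ∀ i, |x i| - |(T : Set (Fin n)).indicator h i| + |(T : Set (Fin n))ᶜ.indicator h i|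
      ≤ |(x + h) i| := by
    intro i
    by_cases hi : i ∈ T
    · have := abs_sub_abs_le_abs_sub (x i) (-h i)
      simp only [abs_neg, sub_neg_eq_add] at this
      simp [hi]
      linarith
    · simp [hi, hx i hi]
  have := sum_le_sum fun i (_ : i ∈ univ) => hpt i
  simp only [sum_add_distrib, sum_sub_distrib] at this
  unfold l1norm at *
  linarith

end Support

section Blocks

variable {n : ℕ}

lemma exists_equiv_antitone_abs (u : Fin n → ℝ) :
    ∃ r : Fin n ≃ Fin n, ∀ a b, r b ≤ r a → |u a| ≤ |u b| := by
  refine ⟨(Tuple.sort fun i => -|u i|).symm, fun a b hab => ?_⟩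
  simpa using Tuple.monotone_sort (fun i => -|u i|) hab

def rankBlock (r : Fin n ≃ Fin n) (K j : ℕ) : Finset (Fin n) :=
  univ.filter fun i => (r i : ℕ) / K = j

variable (r : Fin n ≃ Fin n) {K : ℕ}

lemma card_rankBlock_le (hK : 0 < K) (j : ℕ) : #(rankBlock r K j) ≤ K := by
  have hinj : Set.InjOn (fun i => (r i : ℕ)) (rankBlock r K j) :=
    fun a _ b _ h => r.injective (Fin.ext h)
  calc #(rankBlock r K j) = #((rankBlock r K j).image fun i => (r i : ℕ)) :=
        (card_image_of_injOn hinj).symm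
    _ ≤ #(Ico (j * K) (j * K + K)) := by
        refine card_le_card (image_subset_iff.2 fun i hi => mem_Ico.2 ?_)
        have hi : (r i : ℕ) / K = j := (mem_filter.1 hi).2
        exact ⟨(Nat.le_div_iff_mul_le hK).1 hi.ge,
          by rw [← add_one_mul]; exact (Nat.div_lt_iff_lt_mul hK).1 (by omega)⟩
    _ = K := by simp

lemma le_card_rankBlock (hK : 0 < K) {j : ℕ} {a : Fin n} (ha : a ∈ rankBlock r K (j + 1)) :
    K ≤ #(rankBlock r K j) := by
  have ha : (j + 1) * K ≤ r a := (Nat.le_div_iff_mul_le hK).1 (mem_filter.1 ha).2.ge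
  calc K = #(Ico (j * K) (j * K + K)) := by simp
    _ ≤ #((rankBlock r K j).image fun i => (r i : ℕ)) := by
        refine card_le_card fun k hk => ?_
        have hk := mem_Ico.1 hk
        have hkn : k < n := by have := (r a).isLt; rw [add_one_mul] at ha; omega
        refine mem_image.2 ⟨r.symm ⟨k, hkn⟩, mem_filter.2 ⟨mem_univ _, ?_⟩, by simp⟩
        simpa using Nat.div_eq_of_lt_le hk.1 (by rw [add_one_mul]; exact hk.2)
    _ ≤ #(rankBlock r K j) := card_image_le

lemma rank_div_mem_range (K : ℕ) (i : Fin n) : (r i : ℕ) / K ∈ range (n + 1) :=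
  mem_range.2 (Nat.lt_succ_of_le ((Nat.div_le_self _ _).trans (r i).isLt.le))

lemma sum_indicator_rankBlock (K : ℕ) (u : Fin n → ℝ) :
    ∑ j ∈ range (n + 1), (rankBlock r K j : Set (Fin n)).indicator u = u := by
  funext i
  simp [Set.indicator_apply, rankBlock, sum_ite_eq, rank_div_mem_range r K i]

lemma sum_l1norm_indicator_rankBlock (K : ℕ) (u : Fin n → ℝ) :
    ∑ j ∈ range (n + 1), l1norm ((rankBlock r K j : Set (Fin n)).indicator u) = l1norm u := by
  simp only [l1norm_indicator, rankBlock]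
  exact sum_fiberwise_of_maps_to (fun i _ => rank_div_mem_range r K i) _

lemma abs_le_of_mem_rankBlock_succ {u : Fin n → ℝ} (hr : ∀ a b, r b ≤ r a → |u a| ≤ |u b|)
    {j : ℕ} {a b : Fin n} (ha : a ∈ rankBlock r K (j + 1)) (hb : b ∈ rankBlock r K j) :
    |u a| ≤ |u b| := by
  refine hr a b (le_of_lt (Nat.lt_of_div_lt_div (c := K) ?_))
  rw [(mem_filter.1 ha).2, (mem_filter.1 hb).2]
  exact j.lt_succ_self

lemma sqrt_mul_l2norm_indicator_le_l1norm_indicator {B B' : Finset (Fin n)} {u : Fin n → ℝ}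
    (hB : #B ≤ K) (hB' : K ≤ #B') (hu : ∀ a ∈ B, ∀ b ∈ B', |u a| ≤ |u b|) :
    √K * l2norm ((B : Set (Fin n)).indicator u) ≤ l1norm ((B' : Set (Fin n)).indicator u) := by
  obtain rfl | hK := K.eq_zero_or_pos
  · simp [l1norm_nonneg]
  set s := l1norm ((B' : Set (Fin n)).indicator u)
  have hs : s = ∑ b ∈ B', |u b| := l1norm_indicator B' u
  have hKpos : (0 : ℝ) < K := by exact_mod_cast hK
  have hpt : ∀ a ∈ B, u a ^ 2 ≤ (s / K) ^ 2 := by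
    intro a ha
    have : K * |u a| ≤ s := calc
      K * |u a| ≤ #B' * |u a| := by gcongr
      _ = ∑ _b ∈ B', |u a| := by simp
      _ ≤ s := hs ▸ sum_le_sum (hu a ha)
    rw [← sq_abs]
    gcongr
    rwa [le_div_iff₀' hKpos]
  have hsq : (√K * l2norm ((B : Set (Fin n)).indicator u)) ^ 2 ≤ s ^ 2 := calc
    _ = K * ∑ a ∈ B, u a ^ 2 := by
        rw [mul_pow, Real.sq_sqrt hKpos.le, sq_l2norm]
        simp [Set.indicator_apply, apply_ite (· ^ 2)]
    _ ≤ K * (#B * (s / K) ^ 2) := by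
        gcongr
        simpa using sum_le_sum hpt
    _ ≤ K * (K * (s / K) ^ 2) := by gcongr
    _ = s ^ 2 := by field_simp
  exact abs_le_of_sq_le_sq' hsq (l1norm_nonneg _) |>.2

lemma sqrt_mul_l2norm_indicator_rankBlock_succ_le {u : Fin n → ℝ} (hK : 0 < K)
    (hr : ∀ a b, r b ≤ r a → |u a| ≤ |u b|) (j : ℕ) :
    √K * l2norm ((rankBlock r K (j + 1) : Set (Fin n)).indicator u) ≤
      l1norm ((rankBlock r K j : Set (Fin n)).indicator u) := by
  obtain hempty | ⟨a, ha⟩ := (rankBlock r K (j + 1)).eq_empty_or_nonempty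
  · rw [hempty, coe_empty, Set.indicator_empty', l2norm_zero, mul_zero]
    exact l1norm_nonneg _
  · exact sqrt_mul_l2norm_indicator_le_l1norm_indicator (card_rankBlock_le r hK _)
      (le_card_rankBlock r hK ha) fun _ ha _ hb => abs_le_of_mem_rankBlock_succ r hr ha hb

end Blocks

lemma exists_sparse_decomposition {n K : ℕ} (hK : 0 < K) (u : Fin n → ℝ) :
    ∃ (B : Finset (Fin n)) (v : ℕ → Fin n → ℝ), #B ≤ K ∧ (∀ j, IsSparse K (v j)) ∧
      u = (B : Set (Fin n)).indicator u + ∑ j ∈ range n, v j ∧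
      √K * ∑ j ∈ range n, l2norm (v j) ≤ l1norm u := by
  obtain ⟨r, hr⟩ := exists_equiv_antitone_abs u
  refine ⟨rankBlock r K 0, fun j => (rankBlock r K (j + 1) : Set (Fin n)).indicator u,
    card_rankBlock_le r hK 0,
    fun j => (isSparse_indicator _ u).mono (card_rankBlock_le r hK _), ?_, ?_⟩
  · conv_lhs => rw [← sum_indicator_rankBlock r K u, sum_range_succ', add_comm]
  · calc √K * ∑ j ∈ range n, l2norm ((rankBlock r K (j + 1) : Set (Fin n)).indicator u)
        ≤ ∑ j ∈ range n, l1norm ((rankBlock r K j : Set (Fin n)).indicator u) := by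
          rw [mul_sum]
          exact sum_le_sum fun j _ => sqrt_mul_l2norm_indicator_rankBlock_succ_le r hK hr j
      _ ≤ ∑ j ∈ range (n + 1), l1norm ((rankBlock r K j : Set (Fin n)).indicator u) :=
          sum_le_sum_of_subset_of_nonneg (range_subset_range.2 n.le_succ)
            fun _ _ _ => l1norm_nonneg _
      _ = l1norm u := sum_l1norm_indicator_rankBlock r K u

lemma exists_sparse_decomposition_of_l1norm_compl_le {d S : ℕ} (hS : 0 < S)
    {T : Finset (Fin d)} (hT : #T ≤ S) {h : Fin d → ℝ}
    (hcone : l1norm ((T : Set (Fin d))ᶜ.indicator h) ≤ l1norm ((T : Set (Fin d)).indicator h)) :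
    ∃ (w : Fin d → ℝ) (v : ℕ → Fin d → ℝ), IsSparse (4 * S) w ∧ (∀ j, IsSparse (3 * S) (v j)) ∧
      h = w + ∑ j ∈ range d, v j ∧ ∑ j ∈ range d, l2norm (v j) ≤ l2norm w / √3 := by
  set u := (T : Set (Fin d))ᶜ.indicator h
  obtain ⟨B, v, hB, hv, hu, htail⟩ := exists_sparse_decomposition (K := 3 * S) (by omega) u
  set w := (T : Set (Fin d)).indicator h + (B : Set (Fin d)).indicator u
  refine ⟨w, v, ((isSparse_indicator T h).add (isSparse_indicator B u)).mono (by omega), hv,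
    by rw [add_assoc, ← hu, Set.indicator_self_add_compl], ?_⟩
  have hTw : l2norm ((T : Set (Fin d)).indicator h) ≤ l2norm w :=
    l2norm_le_of_abs_le fun i => by by_cases hi : i ∈ T <;> simp [w, u, Set.indicator_apply, hi]
  have hSpos : 0 < √(S : ℝ) := Real.sqrt_pos.2 (by exact_mod_cast hS)
  rw [le_div_iff₀' (by positivity)]
  refine le_of_mul_le_mul_left ?_ hSpos
  calc √S * (√3 * ∑ j ∈ range d, l2norm (v j))
      = √(3 * S : ℕ) * ∑ j ∈ range d, l2norm (v j) := by
        rw [Nat.cast_mul, Real.sqrt_mul (by norm_num)]; push_cast; ring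
    _ ≤ l1norm ((T : Set (Fin d)).indicator h) := htail.trans hcone
    _ ≤ √S * l2norm ((T : Set (Fin d)).indicator h) :=
        l1norm_le_sqrt_mul_l2norm ((isSparse_indicator T h).mono hT)
    _ ≤ √S * l2norm w := by gcongr

lemma sub_mul_l2norm_le_of_l1norm_compl_le {m d : ℕ} (A : Matrix (Fin m) (Fin d) ℝ) {S : ℕ}
    (hS : 0 < S) {T : Finset (Fin d)} (hT : #T ≤ S) {h : Fin d → ℝ}
    (hcone : l1norm ((T : Set (Fin d))ᶜ.indicator h) ≤ l1norm ((T : Set (Fin d)).indicator h)) :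
    (√(1 - RIC A (4 * S)) - √((1 + RIC A (3 * S)) / 3)) * l2norm h ≤
      (1 + 1 / √3) * l2norm (A *ᵥ h) := by
  obtain ⟨w, v, hw, hv, hhw, hvsum⟩ := exists_sparse_decomposition_of_l1norm_compl_le hS hT hcone
  have hAw : √(1 - RIC A (4 * S)) * l2norm w ≤
      l2norm (A *ᵥ h) + √((1 + RIC A (3 * S)) / 3) * l2norm w := calc
    _ ≤ l2norm (A *ᵥ w) := sqrt_one_sub_RIC_mul_le A hw
    _ = l2norm (A *ᵥ h - ∑ j ∈ range d, A *ᵥ v j) := by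
        rw [hhw, Matrix.mulVec_add, Matrix.mulVec_sum, add_sub_cancel_right]
    _ ≤ l2norm (A *ᵥ h) + ∑ j ∈ range d, l2norm (A *ᵥ v j) :=
        (l2norm_sub_le _ _).trans (by gcongr; exact l2norm_sum_le _ _)
    _ ≤ l2norm (A *ᵥ h) + √(1 + RIC A (3 * S)) * ∑ j ∈ range d, l2norm (v j) := by
        rw [mul_sum]
        gcongr with j
        exact l2norm_mulVec_le_sqrt_one_add_RIC_mul A (hv j)
    _ ≤ l2norm (A *ᵥ h) + √(1 + RIC A (3 * S)) * (l2norm w / √3) := by gcongr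
    _ = l2norm (A *ᵥ h) + √((1 + RIC A (3 * S)) / 3) * l2norm w := by
        rw [Real.sqrt_div' _ (by norm_num)]; ring
  have hh : l2norm h ≤ (1 + 1 / √3) * l2norm w := calc
    l2norm h ≤ l2norm w + ∑ j ∈ range d, l2norm (v j) :=
        hhw ▸ (l2norm_add_le _ _).trans (by gcongr; exact l2norm_sum_le _ _)
    _ ≤ l2norm w + l2norm w / √3 := by gcongr
    _ = (1 + 1 / √3) * l2norm w := by ring
  set c := √(1 - RIC A (4 * S)) - √((1 + RIC A (3 * S)) / 3)
  rcases le_or_gt c 0 with hc | hc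
  · exact (mul_nonpos_of_nonpos_of_nonneg hc (l2norm_nonneg h)).trans
      (mul_nonneg (by positivity) (l2norm_nonneg _))
  · calc c * l2norm h ≤ c * ((1 + 1 / √3) * l2norm w) := by gcongr
      _ = (1 + 1 / √3) * (c * l2norm w) := by ring
      _ ≤ (1 + 1 / √3) * l2norm (A *ᵥ h) := by gcongr; linarith

/-- Robust sparse recovery (Candès–Romberg–Tao): if `δ_{3S} + 3δ_{4S} < 2`, then there is a
constant `C_S > 0` such that for every `σ ≥ 0`, every `S`-sparse `x`, every perturbation `e` with
`‖e‖₂ ≤ σ` and `y = Ax + e`, any minimizer `x⋆` of `min ‖z‖₁ s.t. ‖Az − y‖₂ ≤ σ` satisfies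
`‖x⋆ − x‖₂ ≤ C_S·σ`. -/
theorem stmt4 {m d : ℕ} (A : Matrix (Fin m) (Fin d) ℝ) (S : ℕ) (hS : 1 ≤ S)
    (hRIP : RIC A (3 * S) + 3 * RIC A (4 * S) < 2) :
    ∃ C : ℝ, 0 < C ∧
      ∀ σ : ℝ, 0 ≤ σ → ∀ x : Fin d → ℝ, IsSparse S x →
        ∀ e : Fin m → ℝ, l2norm e ≤ σ →
          ∀ xstar : Fin d → ℝ,
            l2norm (A.mulVec xstar - (A.mulVec x + e)) ≤ σ →
            (∀ z : Fin d → ℝ, l2norm (A.mulVec z - (A.mulVec x + e)) ≤ σ →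
              l1norm xstar ≤ l1norm z) →
            l2norm (xstar - x) ≤ C * σ := by
  set c := √(1 - RIC A (4 * S)) - √((1 + RIC A (3 * S)) / 3)
  have hc : 0 < c := sub_pos.2 <|
    Real.sqrt_lt_sqrt (by linarith [RIC_nonneg A (3 * S)]) (by linarith)
  refine ⟨2 * (1 + 1 / √3) / c, by positivity, fun σ _ x hx e he xstar hfeas hmin => ?_⟩
  set T := univ.filter fun i => x i ≠ 0
  have hcone := l1norm_indicator_compl_le_of_l1norm_add_le (T := T) (h := xstar - x)
    (fun i hi => by simpa [T] using hi) (by simpa using hmin x (by simpa using he))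
  have hAh : l2norm (A *ᵥ (xstar - x)) ≤ 2 * σ := calc
    _ = l2norm ((A *ᵥ xstar - (A *ᵥ x + e)) + e) := by rw [Matrix.mulVec_sub]; abel_nf
    _ ≤ 2 * σ := by linarith [l2norm_add_le (A *ᵥ xstar - (A *ᵥ x + e)) e]
  rw [div_mul_eq_mul_div, le_div_iff₀' hc]
  calc c * l2norm (xstar - x) ≤ (1 + 1 / √3) * l2norm (A *ᵥ (xstar - x)) :=
        sub_mul_l2norm_le_of_l1norm_compl_le A hS hx hcone
    _ ≤ 2 * (1 + 1 / √3) * σ := by nlinarith [show 0 ≤ 1 / √3 by positivity]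
end

section
/- Let A ∈ ℝ^{m×d}, y ∈ ℝ^m, λ > 0, and let F(x) = (1/2)‖Ax − y‖₂² + λ‖x‖₁ with L = λ_max(AᵀA) > 0. Let x⋆ be a minimizer of F over ℝ^d, and let {x_k}_{k ≥ 1} be the FISTA iterates started from any x₀ ∈ ℝ^d. Then for every k ≥ 1, F(x_k) − F(x⋆) ≤ 2L·‖x₀ − x⋆‖₂² / (k + 1)². -/
open Matrix

/-- `Aᵀ * A` is Hermitian (symmetric) for a real matrix `A`. -/
theorem transposeMulSelf_isHermitian {m d : ℕ} (A : Matrix (Fin m) (Fin d) ℝ) :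
    (Aᵀ * A).IsHermitian := by
  simpa using Matrix.isHermitian_conjTranspose_mul_self A

/-- `λ_max(AᵀA)`: the largest eigenvalue of `AᵀA`. -/
noncomputable def lamMax {m d : ℕ} (A : Matrix (Fin m) (Fin d) ℝ) : ℝ :=
  ⨆ i, (transposeMulSelf_isHermitian A).eigenvalues i

/-- The scalar soft-thresholding operator with threshold `a`. -/
noncomputable def softThreshold (z a : ℝ) : ℝ :=
  if z > a then z - a else if z < -a then z + a else 0

/-- The proximal step `p_L(x') = argmin_x {(L/2)‖x − (x' − Aᵀ(Ax' − y)/L)‖₂² + λ‖x‖₁}`, which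
equals coordinatewise soft-thresholding of `x' − Aᵀ(Ax' − y)/L` at threshold `λ/L`. -/
noncomputable def proxL {m d : ℕ} (A : Matrix (Fin m) (Fin d) ℝ) (y : Fin m → ℝ)
    (lam L : ℝ) (x' : Fin d → ℝ) : Fin d → ℝ :=
  fun i => softThreshold ((x' - L⁻¹ • Aᵀ.mulVec (A.mulVec x' - y)) i) (lam / L)

/-- The FISTA state `(x_k, y_{k+1}, t_{k+1})`: starting from `(x_0, y_1, t_1) = (x₀, x₀, 1)`,
with `x_k = p_L(y_k)`, `t_{k+1} = (1 + √(1 + 4t_k²))/2`, and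
`y_{k+1} = x_k + ((t_k − 1)/t_{k+1})(x_k − x_{k−1})`. -/
noncomputable def fistaAux {m d : ℕ} (A : Matrix (Fin m) (Fin d) ℝ) (y : Fin m → ℝ)
    (lam L : ℝ) (x0 : Fin d → ℝ) : ℕ → (Fin d → ℝ) × (Fin d → ℝ) × ℝ
  | 0 => (x0, x0, 1)
  | k + 1 =>
    let s := fistaAux A y lam L x0 k
    let xk := proxL A y lam L s.2.1
    let tk1 := (1 + Real.sqrt (1 + 4 * s.2.2 ^ 2)) / 2
    (xk, xk + ((s.2.2 - 1) / tk1) • (xk - s.1), tk1)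

/-- `fista A y lam L x0 k` is the `k`-th FISTA iterate `x_k` (with `x_0 = x0`). -/
noncomputable def fista {m d : ℕ} (A : Matrix (Fin m) (Fin d) ℝ) (y : Fin m → ℝ)
    (lam L : ℝ) (x0 : Fin d → ℝ) (k : ℕ) : Fin d → ℝ :=
  (fistaAux A y lam L x0 k).1

/-!
The Beck–Teboulle argument. Since `‖Av‖² ≤ λ_max ‖v‖²`, the quadratic part of `F` is majorized
at `z` by its linearization plus `(L/2)‖· − z‖²`, whose sum with `λ‖·‖₁` is minimized by the
soft-thresholding step `p`; its optimality condition yields, for every `x`,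
`L‖p − x‖² + 2F(p) ≤ L‖z − x‖² + 2F(x)`. Applying this at `x = x_k` and `x = x⋆` with weights
`t_{k+1}(t_{k+1} − 1)` and `t_{k+1}`, and using `t_{k+1}² − t_{k+1} = t_k²`, shows that
`2t_k²(F(x_k) − F(x⋆)) + L‖t_k x_k − (t_k − 1)x_{k−1} − x⋆‖²` is nonincreasing, hence at most
`L‖x₀ − x⋆‖²`; finally `t_k ≥ (k + 1)/2`.
-/
open scoped MatrixOrder in
theorem Matrix.IsHermitian.dotProduct_mulVec_le_iSup_eigenvalues {n : Type*} [Fintype n]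
    [DecidableEq n] {B : Matrix n n ℝ} (hB : B.IsHermitian) (v : n → ℝ) :
    v ⬝ᵥ (B *ᵥ v) ≤ (⨆ i, hB.eigenvalues i) * (v ⬝ᵥ v) := by
  have hle : B ≤ algebraMap ℝ _ (⨆ i, hB.eigenvalues i) := by
    refine le_algebraMap_of_spectrum_le (fun r hr => ?_) hB.isSelfAdjoint
    rw [hB.spectrum_real_eq_range_eigenvalues] at hr
    obtain ⟨i, rfl⟩ := hr
    exact le_ciSup (Set.finite_range _).bddAbove i
  have := (Matrix.le_iff.mp hle).dotProduct_mulVec_nonneg v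
  simp only [star_trivial, sub_mulVec, dotProduct_sub, Algebra.algebraMap_eq_smul_one,
    smul_mulVec, one_mulVec, dotProduct_smul, smul_eq_mul, sub_nonneg] at this
  exact this

theorem dotProduct_mulVec_self_le_lamMax {m d : ℕ} (A : Matrix (Fin m) (Fin d) ℝ)
    (v : Fin d → ℝ) : (A *ᵥ v) ⬝ᵥ (A *ᵥ v) ≤ lamMax A * (v ⬝ᵥ v) := by
  have h := (transposeMulSelf_isHermitian A).dotProduct_mulVec_le_iSup_eigenvalues v
  rwa [← mulVec_mulVec, dotProduct_mulVec, ← mulVec_transpose, transpose_transpose,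
    dotProduct_comm] at h

theorem l2norm_sq {n : ℕ} (x : Fin n → ℝ) : l2norm x ^ 2 = x ⬝ᵥ x := by
  rw [l2norm, Real.sq_sqrt (by positivity)]
  simp only [dotProduct, sq]

theorem softThreshold_variational {a : ℝ} (ha : 0 ≤ a) (z x : ℝ) :
    a * |softThreshold z a| + (z - softThreshold z a) * (x - softThreshold z a) ≤ a * |x| := by
  have hx := abs_nonneg x
  unfold softThreshold
  split_ifs with hpos hneg
  · rw [abs_of_nonneg (by linarith)]
    nlinarith [le_abs_self x]
  · rw [abs_of_nonpos (by linarith)]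
    nlinarith [neg_abs_le x]
  · have hz : |z| ≤ a := abs_le.mpr ⟨by linarith, by linarith⟩
    rw [abs_zero, mul_zero, sub_zero, sub_zero, zero_add]
    calc z * x ≤ |z| * |x| := (le_abs_self (z * x)).trans_eq (abs_mul z x)
      _ ≤ a * |x| := mul_le_mul_of_nonneg_right hz hx

theorem l1norm_variational_softThreshold {n : ℕ} {a : ℝ} (ha : 0 ≤ a) (w x : Fin n → ℝ) :
    let s : Fin n → ℝ := fun i => softThreshold (w i) a
    a * l1norm s + (w - s) ⬝ᵥ (x - s) ≤ a * l1norm x := by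
  simp only [l1norm, dotProduct, Pi.sub_apply, Finset.mul_sum, ← Finset.sum_add_distrib]
  exact Finset.sum_le_sum fun i _ => softThreshold_variational ha (w i) (x i)

noncomputable def lassoObjective {m d : ℕ} (A : Matrix (Fin m) (Fin d) ℝ) (y : Fin m → ℝ)
    (lam : ℝ) (x : Fin d → ℝ) : ℝ :=
  1 / 2 * l2norm (A *ᵥ x - y) ^ 2 + lam * l1norm x

theorem dotProduct_self_residual_eq {m n : Type*} [Fintype m] [Fintype n]
    (A : Matrix m n ℝ) (y : m → ℝ) (z u : n → ℝ) :
    (A *ᵥ u - y) ⬝ᵥ (A *ᵥ u - y) = (A *ᵥ z - y) ⬝ᵥ (A *ᵥ z - y)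
      + 2 * ((Aᵀ *ᵥ (A *ᵥ z - y)) ⬝ᵥ (u - z)) + (A *ᵥ (u - z)) ⬝ᵥ (A *ᵥ (u - z)) := by
  have hsplit : A *ᵥ u - y = (A *ᵥ z - y) + A *ᵥ (u - z) := by
    rw [mulVec_sub]; abel
  rw [hsplit, mulVec_transpose, ← dotProduct_mulVec]
  simp only [add_dotProduct, dotProduct_add, dotProduct_comm (A *ᵥ (u - z))]
  ring

theorem lassoObjective_proxL_le {m d : ℕ} {A : Matrix (Fin m) (Fin d) ℝ} {y : Fin m → ℝ}
    {lam L : ℝ} (hlam : 0 ≤ lam) (hL : 0 < L)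
    (hA : ∀ v, (A *ᵥ v) ⬝ᵥ (A *ᵥ v) ≤ L * (v ⬝ᵥ v)) (z x : Fin d → ℝ) :
    L * ((proxL A y lam L z - x) ⬝ᵥ (proxL A y lam L z - x))
        + 2 * lassoObjective A y lam (proxL A y lam L z)
      ≤ L * ((z - x) ⬝ᵥ (z - x)) + 2 * lassoObjective A y lam x := by
  set g := Aᵀ *ᵥ (A *ᵥ z - y)
  set p := proxL A y lam L z
  have hl1 : lam * l1norm p + L * ((z - L⁻¹ • g - p) ⬝ᵥ (x - p)) ≤ lam * l1norm x := by
    have h := mul_le_mul_of_nonneg_left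
      (l1norm_variational_softThreshold (div_nonneg hlam hL.le) (z - L⁻¹ • g) x) hL.le
    rwa [mul_add, ← mul_assoc, ← mul_assoc, mul_div_cancel₀ lam hL.ne'] at h
  have hp := dotProduct_self_residual_eq A y z p
  have hx := dotProduct_self_residual_eq A y z x
  have hquad := hA (p - z)
  have hnonneg : 0 ≤ (A *ᵥ (x - z)) ⬝ᵥ (A *ᵥ (x - z)) := dotProduct_self_star_nonneg _
  -- the linear terms in `g` cancel, and the quadratic ones form `‖(p - x) - (p - z)‖²`
  have hid : L * ((p - x) ⬝ᵥ (p - x)) + 2 * (g ⬝ᵥ (p - z)) + L * ((p - z) ⬝ᵥ (p - z))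
      - 2 * (L * ((z - L⁻¹ • g - p) ⬝ᵥ (x - p))) - 2 * (g ⬝ᵥ (x - z))
      = L * ((z - x) ⬝ᵥ (z - x)) := by
    simp only [dotProduct, Pi.sub_apply, Pi.smul_apply, smul_eq_mul, Finset.mul_sum,
      ← Finset.sum_sub_distrib, ← Finset.sum_add_distrib]
    refine Finset.sum_congr rfl fun i _ => ?_
    field_simp
    ring
  simp only [lassoObjective, l2norm_sq]
  linarith

/-- The momentum sequence; `nesterovSeq k` is `t_{k+1}` in the indexing of the statement. -/
noncomputable def nesterovSeq : ℕ → ℝ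
  | 0 => 1
  | k + 1 => (1 + Real.sqrt (1 + 4 * nesterovSeq k ^ 2)) / 2

theorem nesterovSeq_succ_sq (k : ℕ) :
    nesterovSeq (k + 1) ^ 2 = nesterovSeq (k + 1) + nesterovSeq k ^ 2 := by
  have hs := Real.sq_sqrt (show (0 : ℝ) ≤ 1 + 4 * nesterovSeq k ^ 2 by positivity)
  simp only [nesterovSeq]
  nlinarith

theorem half_add_one_le_nesterovSeq (k : ℕ) : (k : ℝ) / 2 + 1 ≤ nesterovSeq k := by
  induction k with
  | zero => simp [nesterovSeq]
  | succ k ih =>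
    set t := nesterovSeq k
    have hs := Real.sq_sqrt (show (0 : ℝ) ≤ 1 + 4 * t ^ 2 by positivity)
    have hs0 := Real.sqrt_nonneg (1 + 4 * t ^ 2)
    have : 2 * t ≤ Real.sqrt (1 + 4 * t ^ 2) := by nlinarith
    simp only [nesterovSeq, Nat.cast_add_one]
    linarith

theorem one_le_nesterovSeq (k : ℕ) : 1 ≤ nesterovSeq k := by
  linarith [half_add_one_le_nesterovSeq k, (Nat.cast_nonneg k : (0 : ℝ) ≤ k)]

theorem momentum_three_point_identity {n : Type*} [Fintype n] (t : ℝ) (a b c s : n → ℝ) :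
    t * ((t - 1) * ((b - a) ⬝ᵥ (b - a) - (c - a) ⬝ᵥ (c - a))
      + ((b - s) ⬝ᵥ (b - s) - (c - s) ⬝ᵥ (c - s)))
    = (t • b - (t - 1) • a - s) ⬝ᵥ (t • b - (t - 1) • a - s)
      - (t • c - (t - 1) • a - s) ⬝ᵥ (t • c - (t - 1) • a - s) := by
  simp only [dotProduct, Pi.sub_apply, Pi.smul_apply, smul_eq_mul, Finset.mul_sum,
    ← Finset.sum_sub_distrib, ← Finset.sum_add_distrib]
  exact Finset.sum_congr rfl fun i _ => by ring

section Energy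

variable {n : Type*} [Fintype n]

def fistaEnergy (F : (n → ℝ) → ℝ) (L t : ℝ) (xprev x xstar : n → ℝ) : ℝ :=
  2 * t ^ 2 * (F x - F xstar)
    + L * ((t • x - (t - 1) • xprev - xstar) ⬝ᵥ (t • x - (t - 1) • xprev - xstar))

theorem two_mul_sq_mul_sub_le_fistaEnergy (F : (n → ℝ) → ℝ) {L : ℝ} (hL : 0 ≤ L)
    (t : ℝ) (xprev x xstar : n → ℝ) :
    2 * t ^ 2 * (F x - F xstar) ≤ fistaEnergy F L t xprev x xstar :=
  le_add_of_nonneg_right (mul_nonneg hL (dotProduct_self_star_nonneg _))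

theorem fistaEnergy_step_le {P : (n → ℝ) → n → ℝ} {F : (n → ℝ) → ℝ} {L : ℝ}
    (hP : ∀ z x, L * ((P z - x) ⬝ᵥ (P z - x)) + 2 * F (P z)
      ≤ L * ((z - x) ⬝ᵥ (z - x)) + 2 * F x)
    {t t' : ℝ} (ht' : 1 ≤ t') (hrec : t' ^ 2 = t' + t ^ 2) (xprev x xstar : n → ℝ) :
    fistaEnergy F L t' x (P (x + ((t - 1) / t') • (x - xprev))) xstar
      ≤ fistaEnergy F L t xprev x xstar := by
  set z := x + ((t - 1) / t') • (x - xprev)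
  have hz : t' • z - (t' - 1) • x = t • x - (t - 1) • xprev := by
    have : t' ≠ 0 := by positivity
    ext i
    simp only [z, Pi.sub_apply, Pi.add_apply, Pi.smul_apply, smul_eq_mul]
    field_simp
    ring
  have hid := momentum_three_point_identity t' x (P z) z xstar
  rw [hz] at hid
  have h₁ := mul_le_mul_of_nonneg_left (hP z x) (mul_nonneg (by linarith : (0 : ℝ) ≤ t')
    (by linarith : (0 : ℝ) ≤ t' - 1))
  have h₂ := mul_le_mul_of_nonneg_left (hP z xstar) (by linarith : (0 : ℝ) ≤ t')
  simp only [fistaEnergy]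
  linear_combination h₁ + h₂ - L * hid + 2 * (F x - F xstar) * hrec

end Energy

section Fista

variable {m d : ℕ} (A : Matrix (Fin m) (Fin d) ℝ) (y : Fin m → ℝ) (lam L : ℝ) (x0 : Fin d → ℝ)

theorem fistaAux_momentum (k : ℕ) : (fistaAux A y lam L x0 k).2.2 = nesterovSeq k := by
  induction k with
  | zero => rfl
  | succ k ih => simp only [fistaAux, nesterovSeq, ih]

theorem fista_succ (k : ℕ) :
    fista A y lam L x0 (k + 2) = proxL A y lam L (fista A y lam L x0 (k + 1)
      + ((nesterovSeq k - 1) / nesterovSeq (k + 1))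
        • (fista A y lam L x0 (k + 1) - fista A y lam L x0 k)) := by
  simp only [fista, fistaAux, ← fistaAux_momentum A y lam L x0]

theorem fistaEnergy_le (hlam : 0 ≤ lam) (hL : 0 < L)
    (hA : ∀ v, (A *ᵥ v) ⬝ᵥ (A *ᵥ v) ≤ L * (v ⬝ᵥ v)) (xstar : Fin d → ℝ) (k : ℕ) :
    fistaEnergy (lassoObjective A y lam) L (nesterovSeq k) (fista A y lam L x0 k)
        (fista A y lam L x0 (k + 1)) xstar
      ≤ L * ((x0 - xstar) ⬝ᵥ (x0 - xstar)) := by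
  have hP := lassoObjective_proxL_le (y := y) hlam hL hA
  induction k with
  | zero =>
    have hx1 : fista A y lam L x0 (0 + 1) = proxL A y lam L x0 := rfl
    simp only [fistaEnergy, nesterovSeq, hx1, one_smul, sub_self, zero_smul, sub_zero]
    linarith [hP x0 xstar]
  | succ k ih =>
    rw [fista_succ]
    exact (fistaEnergy_step_le hP (one_le_nesterovSeq _) (nesterovSeq_succ_sq k) _ _ _).trans ih

end Fista

/-- FISTA convergence rate: with `F(x) = (1/2)‖Ax − y‖₂² + λ‖x‖₁`, `L = λ_max(AᵀA) > 0`,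
`x⋆` a minimizer of `F`, and `{x_k}` the FISTA iterates from `x₀`, one has for all `k ≥ 1`:
`F(x_k) − F(x⋆) ≤ 2L‖x₀ − x⋆‖₂²/(k + 1)²`. -/
theorem stmt6 {m d : ℕ} (A : Matrix (Fin m) (Fin d) ℝ) (y : Fin m → ℝ)
    (lam : ℝ) (hlam : 0 < lam) (hL : 0 < lamMax A)
    (F : (Fin d → ℝ) → ℝ)
    (hF : ∀ x, F x = 1 / 2 * l2norm (A.mulVec x - y) ^ 2 + lam * l1norm x)
    (xstar : Fin d → ℝ) (hmin : ∀ x, F xstar ≤ F x)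
    (x0 : Fin d → ℝ) :
    ∀ k : ℕ, 1 ≤ k →
      F (fista A y lam (lamMax A) x0 k) - F xstar ≤
        2 * lamMax A * l2norm (x0 - xstar) ^ 2 / ((k : ℝ) + 1) ^ 2 := by
  intro k hk
  obtain ⟨j, rfl⟩ := Nat.exists_eq_add_of_le' hk
  obtain rfl : F = lassoObjective A y lam := funext hF
  have hE := (two_mul_sq_mul_sub_le_fistaEnergy _ hL.le _ _ _ _).trans
    (fistaEnergy_le A y lam (lamMax A) x0 hlam.le hL (dotProduct_mulVec_self_le_lamMax A) xstar j)
  have hgap := sub_nonneg.mpr (hmin (fista A y lam (lamMax A) x0 (j + 1)))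
  have ht : ((j + 1 : ℕ) + 1 : ℝ) ^ 2 ≤ 4 * nesterovSeq j ^ 2 := by
    have := pow_le_pow_left₀ (by positivity) (half_add_one_le_nesterovSeq j) 2
    push_cast
    linarith
  rw [l2norm_sq, le_div_iff₀ (by positivity)]
  nlinarith [mul_le_mul_of_nonneg_left ht hgap]
end
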